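/- Let A be a Dedekind domain with fraction field K, ν the natural divisor valuation on K* into the group of fractional ideals (sending x to the ideal Ax, ordered by reverse inclusion), and w the Gauss extension of ν to K(X) defined via contents of polynomials. Then the Kronecker function ring R(w) = {r/s ∈ K(X) : c(r) ⊆ c(s)} ∪ {0} is a principal ideal domain. -/

import Mathlib

/-- The content of a polynomial p ∈ K[X]: the fractional ideal of A generated by the
coefficients of p. -/
noncomputable def polyContent (A : Type*) [CommRing A] {K : Type*} [Field K]
    [Algebra A K] [IsFractionRing A K] (p : Polynomial K) :
    FractionalIdeal (nonZeroDivisors A) K :=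
  FractionalIdeal.spanFinset A p.support (fun n => p.coeff n)

/-!
The content `c` extends from `K[X]` to `K(X)` by `c(r / s) = c(r) / c(s)`. This is well defined
and multiplicative by Dedekind's content formula, which holds in `A` because it holds in every
localization `A_P`: there `A_P` is a principal ideal domain, where a polynomial is a constant
times a primitive one. Then `R(w) = {f | c(f) ≤ 1}`, and `y ∈ (x)` as soon as `c(y) ≤ c(x)`.
For `x, y` in an ideal `I` and `n` large, `x + Xⁿ y ∈ I` has content `c(x) ⊔ c(y)`. The contents
of the elements of `I` are integral ideals of the noetherian ring `A`, so one of them, `c(x₀)`, is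
maximal, hence the largest, and `I = (x₀)`.
-/

open Polynomial FractionalIdeal
open scoped nonZeroDivisors

namespace Polynomial

theorem contentIdeal_eq_span_range_coeff {R : Type*} [Semiring R] (p : R[X]) :
    p.contentIdeal = Ideal.span (Set.range p.coeff) := by
  apply le_antisymm
  · rw [contentIdeal_def]
    exact Ideal.span_mono fun r hr => by
      obtain ⟨n, -, rfl⟩ := mem_coeffs_iff.mp hr
      exact ⟨n, rfl⟩
  · exact Ideal.span_le.mpr (Set.range_subset_iff.mpr p.coeff_mem_contentIdeal)

theorem contentIdeal_C_mul {R : Type*} [CommSemiring R] (a : R) (p : R[X]) :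
    (C a * p).contentIdeal = Ideal.span {a} * p.contentIdeal := by
  simp only [contentIdeal_eq_span_range_coeff, Ideal.span_mul_span', Set.singleton_mul,
    ← Set.range_comp, Function.comp_def, ← coeff_C_mul]

theorem exists_eq_C_mul_contentIdeal_eq_top {R : Type*} [CommRing R] [IsDomain R]
    [IsPrincipalIdealRing R] (f : R[X]) : ∃ a f', f = C a * f' ∧ f'.contentIdeal = ⊤ := by
  rcases eq_or_ne f 0 with rfl | hf
  · exact ⟨0, 1, by simp, contentIdeal_one⟩
  have hprin := IsPrincipalIdealRing.principal f.contentIdeal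
  obtain ⟨f', hf'⟩ := hprin.contentIdeal_generator_dvd
  have ha : hprin.generator ≠ 0 := by
    rintro h
    simp [h, hf] at hf'
  refine ⟨_, f', hf', ?_⟩
  rw [← Ideal.span_singleton_mul_right_inj ha, ← contentIdeal_C_mul, ← hf', Ideal.mul_top,
    Ideal.span_singleton_generator]

theorem contentIdeal_mul_of_isPrincipalIdealRing {R : Type*} [CommRing R] [IsDomain R]
    [IsPrincipalIdealRing R] (p q : R[X]) :
    (p * q).contentIdeal = p.contentIdeal * q.contentIdeal := by
  obtain ⟨a, p', rfl, hp'⟩ := exists_eq_C_mul_contentIdeal_eq_top p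
  obtain ⟨b, q', rfl, hq'⟩ := exists_eq_C_mul_contentIdeal_eq_top q
  rw [mul_mul_mul_comm, ← C_mul, contentIdeal_C_mul, contentIdeal_C_mul, contentIdeal_C_mul,
    contentIdeal_mul_eq_top_of_contentIdeal_eq_top hp' hq', hp', hq',
    ← Ideal.span_singleton_mul_span_singleton]
  simp only [Ideal.mul_top]

instance _root_.Localization.AtPrime.isPrincipalIdealRing {A : Type*} [CommRing A]
    [IsDedekindDomain A] (P : Ideal A) [P.IsPrime] :
    IsPrincipalIdealRing (Localization.AtPrime P) :=
  IsPrincipalIdealRing.of_finite_maximals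
    (Set.Subsingleton.finite fun _ hI _ hJ => (IsLocalRing.eq_maximalIdeal hI).trans
      (IsLocalRing.eq_maximalIdeal hJ).symm)

theorem contentIdeal_mul {A : Type*} [CommRing A] [IsDedekindDomain A] (p q : A[X]) :
    (p * q).contentIdeal = p.contentIdeal * q.contentIdeal :=
  Ideal.eq_of_localization_maximal fun P _ => by
    simp only [Ideal.map_mul, ← contentIdeal_map_eq_map_contentIdeal, Polynomial.map_mul,
      contentIdeal_mul_of_isPrincipalIdealRing]

end Polynomial

theorem FractionalIdeal.div_le_one_iff {A : Type*} [CommRing A] [IsDedekindDomain A] {K : Type*}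
    [Field K] [Algebra A K] [IsFractionRing A K] {I J : FractionalIdeal A⁰ K} (hJ : J ≠ 0) :
    I / J ≤ 1 ↔ I ≤ J := by
  constructor
  · intro h
    calc I = I / J * J := (div_mul_cancel₀ I hJ).symm
      _ ≤ 1 * J := mul_le_mul_left h J
      _ = J := one_mul J
  · intro h
    calc I / J = I * J⁻¹ := div_eq_mul_inv I J
      _ ≤ J * J⁻¹ := mul_le_mul_left h _
      _ = 1 := mul_inv_cancel₀ hJ

section polyContent

variable {A : Type*} [CommRing A] {K : Type*} [Field K] [Algebra A K] [IsFractionRing A K]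

theorem coe_polyContent (p : K[X]) :
    (polyContent A p : Submodule A K) = Submodule.span A (Set.range p.coeff) := by
  rw [polyContent, spanFinset_coe]
  apply le_antisymm
  · exact Submodule.span_mono (Set.image_subset_range _ _)
  · refine Submodule.span_le.mpr (Set.range_subset_iff.mpr fun n => ?_)
    by_cases hn : n ∈ p.support
    · exact Submodule.subset_span ⟨n, hn, rfl⟩
    · simp [notMem_support_iff.mp hn]

theorem polyContent_eq_zero_iff {p : K[X]} : polyContent A p = 0 ↔ p = 0 := by
  simp [polyContent, spanFinset_eq_zero, Polynomial.ext_iff]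

theorem polyContent_zero : polyContent A (0 : K[X]) = 0 :=
  polyContent_eq_zero_iff.mpr rfl

theorem polyContent_ne_zero {p : K[X]} (hp : p ≠ 0) : polyContent A p ≠ 0 :=
  mt polyContent_eq_zero_iff.mp hp

theorem polyContent_C_mul (x : K) (p : K[X]) :
    polyContent A (C x * p) = spanSingleton A⁰ x * polyContent A p := by
  rw [← coeToSubmodule_inj, FractionalIdeal.coe_mul, coe_spanSingleton, coe_polyContent,
    coe_polyContent, Submodule.span_mul_span, Set.singleton_mul, ← Set.range_comp]
  simp only [Function.comp_def, ← coeff_C_mul]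

theorem polyContent_map (F : A[X]) :
    polyContent A (F.map (algebraMap A K)) = F.contentIdeal := by
  rw [← coeToSubmodule_inj, coe_polyContent, coe_coeIdeal, contentIdeal_eq_span_range_coeff,
    IsLocalization.coeSubmodule_span, ← Set.range_comp]
  simp only [Function.comp_def, ← coeff_map]

theorem exists_map_eq_C_mul [IsDomain A] (p : K[X]) :
    ∃ (a : A) (F : A[X]), algebraMap A K a ≠ 0 ∧
      F.map (algebraMap A K) = C (algebraMap A K a) * p := by
  obtain ⟨a, ha0, ha⟩ := IsLocalization.integerNormalization_spec A⁰ p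
  refine ⟨a, _, IsFractionRing.to_map_ne_zero_of_mem_nonZeroDivisors ha0, ha.trans ?_⟩
  rw [Algebra.smul_def, Polynomial.algebraMap_apply]

theorem polyContent_mul [IsDedekindDomain A] (p q : K[X]) :
    polyContent A (p * q) = polyContent A p * polyContent A q := by
  obtain ⟨a, F, ha, hF⟩ := exists_map_eq_C_mul (A := A) p
  obtain ⟨b, G, hb, hG⟩ := exists_map_eq_C_mul (A := A) q
  set x := algebraMap A K a
  set y := algebraMap A K b
  refine mul_left_cancel₀ (spanSingleton_ne_zero_iff.mpr (mul_ne_zero ha hb)) ?_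
  calc spanSingleton A⁰ (x * y) * polyContent A (p * q)
      = polyContent A ((F * G).map (algebraMap A K)) := by
        rw [← polyContent_C_mul, Polynomial.map_mul, hF, hG, C_mul]
        congr 1
        ring
    _ = polyContent A (F.map (algebraMap A K)) * polyContent A (G.map (algebraMap A K)) := by
        rw [polyContent_map, polyContent_map, polyContent_map, contentIdeal_mul, coeIdeal_mul]
    _ = spanSingleton A⁰ (x * y) * (polyContent A p * polyContent A q) := by
        rw [hF, hG, polyContent_C_mul, polyContent_C_mul, ← spanSingleton_mul_spanSingleton]
        ring

theorem polyContent_add_X_pow_mul (f g : K[X]) {n : ℕ} (hn : f.degree < n) :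
    polyContent A (f + X ^ n * g) = polyContent A f ⊔ polyContent A g := by
  have hf : ∀ i, n ≤ i → f.coeff i = 0 := fun i hi =>
    coeff_eq_zero_of_degree_lt (hn.trans_le (WithBot.coe_le_coe.mpr hi))
  rw [← coeToSubmodule_inj, coe_sup, coe_polyContent, coe_polyContent, coe_polyContent]
  apply le_antisymm
  · refine Submodule.span_le.mpr (Set.range_subset_iff.mpr fun i => ?_)
    rw [coeff_add, coeff_X_pow_mul']
    split_ifs with hi
    · rw [hf i hi, zero_add]
      exact Submodule.mem_sup_right (Submodule.subset_span ⟨i - n, rfl⟩)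
    · rw [add_zero]
      exact Submodule.mem_sup_left (Submodule.subset_span ⟨i, rfl⟩)
  · refine sup_le (Submodule.span_le.mpr (Set.range_subset_iff.mpr fun i => ?_))
      (Submodule.span_le.mpr (Set.range_subset_iff.mpr fun j => ?_))
    · by_cases hi : n ≤ i
      · simp [hf i hi]
      · rw [show f.coeff i = (f + X ^ n * g).coeff i by
          rw [coeff_add, coeff_X_pow_mul', if_neg hi, add_zero]]
        exact Submodule.subset_span ⟨i, rfl⟩
    · rw [show g.coeff j = (f + X ^ n * g).coeff (j + n) by
        rw [coeff_add, coeff_X_pow_mul, hf _ (Nat.le_add_left n j), zero_add]]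
      exact Submodule.subset_span ⟨j + n, rfl⟩

end polyContent

section ratContent

variable (A : Type*) [CommRing A] [IsDedekindDomain A] {K : Type*} [Field K] [Algebra A K]
  [IsFractionRing A K]

noncomputable def ratContent (f : RatFunc K) : FractionalIdeal A⁰ K :=
  polyContent A f.num / polyContent A f.denom

variable {A}

theorem ratContent_div_algebraMap (r : K[X]) {s : K[X]} (hs : s ≠ 0) :
    ratContent A (algebraMap K[X] (RatFunc K) r / algebraMap K[X] (RatFunc K) s) =
      polyContent A r / polyContent A s := by
  set x := algebraMap K[X] (RatFunc K) r / algebraMap K[X] (RatFunc K) s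
  have hx : x.num * s = r * x.denom := (RatFunc.num_mul_eq_mul_denom_iff hs).mpr rfl
  rw [ratContent, div_eq_div_iff (polyContent_ne_zero x.denom_ne_zero) (polyContent_ne_zero hs),
    ← polyContent_mul, ← polyContent_mul, hx]

theorem ratContent_eq_zero_iff {x : RatFunc K} : ratContent A x = 0 ↔ x = 0 := by
  rw [ratContent, div_eq_zero_iff, polyContent_eq_zero_iff, polyContent_eq_zero_iff,
    RatFunc.num_eq_zero_iff, or_iff_left x.denom_ne_zero]

theorem ratContent_zero : ratContent A (0 : RatFunc K) = 0 :=
  ratContent_eq_zero_iff.mpr rfl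

theorem ratContent_div (x y : RatFunc K) :
    ratContent A (x / y) = ratContent A x / ratContent A y := by
  rcases eq_or_ne y 0 with rfl | hy
  · rw [_root_.div_zero, ratContent_zero, _root_.div_zero]
  have hxy : x / y = algebraMap K[X] (RatFunc K) (x.num * y.denom) /
      algebraMap K[X] (RatFunc K) (x.denom * y.num) := by
    conv_lhs => rw [← RatFunc.num_div_denom x, ← RatFunc.num_div_denom y]
    rw [div_div_div_eq, map_mul, map_mul]
  rw [hxy, ratContent_div_algebraMap _ (mul_ne_zero x.denom_ne_zero (RatFunc.num_ne_zero hy)),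
    polyContent_mul, polyContent_mul, ratContent, ratContent, div_div_div_eq]

theorem ratContent_algebraMap_X_pow (n : ℕ) :
    ratContent A (algebraMap K[X] (RatFunc K) (X ^ n)) = 1 := by
  have hX : polyContent A (X ^ n : K[X]) = polyContent A 1 := by
    simpa [polyContent_zero] using
      polyContent_add_X_pow_mul (A := A) 0 (1 : K[X]) (degree_zero.trans_lt (WithBot.bot_lt_coe n))
  rw [← div_one (algebraMap K[X] (RatFunc K) (X ^ n)), ← map_one (algebraMap K[X] (RatFunc K)),
    ratContent_div_algebraMap _ one_ne_zero, hX, div_self (polyContent_ne_zero one_ne_zero)]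

theorem exists_ratContent_add_X_pow_mul (x y : RatFunc K) : ∃ n : ℕ,
    ratContent A (x + algebraMap K[X] (RatFunc K) (X ^ n) * y) =
      ratContent A x ⊔ ratContent A y := by
  set f := x.num * y.denom
  set g := y.num * x.denom
  set d := x.denom * y.denom
  have hd : d ≠ 0 := mul_ne_zero x.denom_ne_zero y.denom_ne_zero
  have hx : x = algebraMap K[X] (RatFunc K) f / algebraMap K[X] (RatFunc K) d :=
    (RatFunc.num_mul_eq_mul_denom_iff hd).mp (by ring)
  have hy : y = algebraMap K[X] (RatFunc K) g / algebraMap K[X] (RatFunc K) d :=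
    (RatFunc.num_mul_eq_mul_denom_iff hd).mp (by ring)
  refine ⟨f.natDegree + 1, ?_⟩
  have hsum : x + algebraMap K[X] (RatFunc K) (X ^ (f.natDegree + 1)) * y =
      algebraMap K[X] (RatFunc K) (f + X ^ (f.natDegree + 1) * g) /
        algebraMap K[X] (RatFunc K) d := by
    rw [map_add, add_div, map_mul _ (X ^ _) g, mul_div_assoc, ← hx, ← hy]
  rw [hsum, hx, hy, ratContent_div_algebraMap _ hd, ratContent_div_algebraMap _ hd,
    ratContent_div_algebraMap _ hd, polyContent_add_X_pow_mul f g
      (degree_le_natDegree.trans_lt (WithBot.coe_lt_coe.mpr f.natDegree.lt_succ_self)),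
    sup_eq_add, sup_eq_add, div_eq_mul_inv, div_eq_mul_inv, div_eq_mul_inv, add_mul]

theorem ratContent_le_one_iff {x : RatFunc K} : ratContent A x ≤ 1 ↔
    ∃ r s : K[X], s ≠ 0 ∧
      x = algebraMap K[X] (RatFunc K) r / algebraMap K[X] (RatFunc K) s ∧
      polyContent A r ≤ polyContent A s := by
  constructor
  · intro hx
    refine ⟨x.num, x.denom, x.denom_ne_zero, (RatFunc.num_div_denom x).symm, ?_⟩
    rwa [ratContent, div_le_one_iff (polyContent_ne_zero x.denom_ne_zero)] at hx
  · rintro ⟨r, s, hs, rfl, hrs⟩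
    rwa [ratContent_div_algebraMap r hs, div_le_one_iff (polyContent_ne_zero hs)]

end ratContent

section KroneckerFunctionRing

variable {A : Type*} [CommRing A] [IsDedekindDomain A] {K : Type*} [Field K] [Algebra A K]
  [IsFractionRing A K] {R : Subring (RatFunc K)} (hR : ∀ x, x ∈ R ↔ ratContent A x ≤ 1)
include hR

theorem exists_coeIdeal_eq_ratContent (x : R) :
    ∃ J : Ideal A, (J : FractionalIdeal A⁰ K) = ratContent A x :=
  le_one_iff_exists_coeIdeal.mp ((hR x).mp x.2)

theorem mem_span_singleton_of_ratContent_le {x y : R}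
    (h : ratContent A (y : RatFunc K) ≤ ratContent A (x : RatFunc K)) :
    y ∈ Ideal.span {x} := by
  rcases eq_or_ne (x : RatFunc K) 0 with hx | hx
  · rw [hx, ratContent_zero, FractionalIdeal.le_zero_iff, ratContent_eq_zero_iff] at h
    rw [show y = 0 from Subtype.ext h]
    exact Ideal.zero_mem _
  · have hq : (y / x : RatFunc K) ∈ R := by
      rw [hR, ratContent_div, div_le_one_iff (mt ratContent_eq_zero_iff.mp hx)]
      exact h
    exact Ideal.mem_span_singleton'.mpr ⟨⟨_, hq⟩, Subtype.ext (div_mul_cancel₀ _ hx)⟩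

theorem exists_mem_ratContent_eq_sup {I : Ideal R} {x y : R} (hx : x ∈ I) (hy : y ∈ I) :
    ∃ z ∈ I, ratContent A (z : RatFunc K) =
      ratContent A (x : RatFunc K) ⊔ ratContent A (y : RatFunc K) := by
  obtain ⟨n, hn⟩ := exists_ratContent_add_X_pow_mul (A := A) (x : RatFunc K) y
  have hXn : algebraMap K[X] (RatFunc K) (X ^ n) ∈ R :=
    (hR _).mpr (ratContent_algebraMap_X_pow n).le
  refine ⟨x + ⟨_, hXn⟩ * y, I.add_mem hx (I.mul_mem_left _ hy), ?_⟩
  rwa [Subring.coe_add, Subring.coe_mul]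

theorem isPrincipalIdealRing_of_mem_iff_ratContent_le_one : IsPrincipalIdealRing R := by
  refine ⟨fun I => ?_⟩
  obtain ⟨J₀, ⟨x₀, hx₀, hJ₀⟩, hJ₀_max⟩ := set_has_maximal_iff_noetherian.mpr inferInstance
    {J : Ideal A | ∃ x ∈ I, (J : FractionalIdeal A⁰ K) = ratContent A (x : RatFunc K)}
    ⟨⊥, 0, I.zero_mem, by
      rw [coeIdeal_bot, ZeroMemClass.coe_zero, ratContent_zero]⟩
  refine ⟨x₀, le_antisymm (fun y hy => mem_span_singleton_of_ratContent_le hR ?_)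
    ((Ideal.span_singleton_le_iff_mem I).mpr hx₀)⟩
  obtain ⟨J, hJ⟩ := exists_coeIdeal_eq_ratContent hR y
  obtain ⟨z, hz, hz_sup⟩ := exists_mem_ratContent_eq_sup hR hx₀ hy
  have hsup : J₀ ⊔ J = J₀ := by
    by_contra hne
    refine hJ₀_max (J₀ ⊔ J) ⟨z, hz, ?_⟩ (lt_of_le_of_ne le_sup_left (Ne.symm hne))
    rw [hz_sup, coeIdeal_sup, hJ₀, hJ, sup_eq_add]
  rw [← hJ₀, ← hJ, coeIdeal_le_coeIdeal]
  exact sup_eq_left.mp hsup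

end KroneckerFunctionRing

/-- The Kronecker function ring R(w) = {0} ∪ {r/s : c(r) ⊆ c(s)} of a Dedekind domain A
is a principal ideal domain. -/
theorem stmt_16 {A : Type*} [CommRing A] [IsDedekindDomain A] {K : Type*} [Field K]
    [Algebra A K] [IsFractionRing A K]
    (S : Subring (RatFunc K))
    (hS : ∀ x : RatFunc K, x ∈ S ↔
      ∃ r s : Polynomial K, s ≠ 0 ∧
        x = algebraMap (Polynomial K) (RatFunc K) r / algebraMap (Polynomial K) (RatFunc K) s ∧
        polyContent A r ≤ polyContent A s) :
    IsPrincipalIdealRing S :=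
  isPrincipalIdealRing_of_mem_iff_ratContent_le_one fun x => (hS x).trans ratContent_le_one_iff.symm
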